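/- arXiv:2312.01247 — 4 statements merged into one kernel-verified Lean document; each statement's English description precedes it below -/
import Mathlib

section
/- Let s ≥ 0, 0 < a < 1, ν > 0, and let w_s(x) = (1 + e^{s x^{1-a}})(1 + e^{-s x^{1-a}}). For t ≥ 0 and x ≥ 0, set y = (x^{1-a} + ν(1-a)t)^{1/(1-a)}. Then w_s(y) ≤ e^{s ν (1-a) t} w_s(x). -/
open Real

/-- Raising the argument by `d ≥ 0` grows the first factor by at most `exp d` and shrinks the second. -/
theorem one_add_exp_mul_one_add_exp_neg_add_le (v : ℝ) {d : ℝ} (hd : 0 ≤ d) :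
    (1 + exp (v + d)) * (1 + exp (-(v + d))) ≤ exp d * ((1 + exp v) * (1 + exp (-v))) := by
  have hgrow : 1 + exp (v + d) ≤ exp d * (1 + exp v) := by
    rw [exp_add, mul_add, mul_one, mul_comm]
    linarith [one_le_exp hd]
  have hshrink : 1 + exp (-(v + d)) ≤ 1 + exp (-v) := by
    gcongr
    linarith
  rw [← mul_assoc]
  exact mul_le_mul hgrow hshrink (by positivity) (by positivity)

theorem weight_estimate_general (s a ν : ℝ) (hs : 0 ≤ s) (ha1 : a < 1) (hν : 0 < ν)
    (w : ℝ → ℝ)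
    (hw : ∀ x, w x = (1 + Real.exp (s * x ^ (1 - a))) * (1 + Real.exp (-(s * x ^ (1 - a)))))
    (t x : ℝ) (ht : 0 ≤ t) (hx : 0 ≤ x) :
    w ((x ^ (1 - a) + ν * (1 - a) * t) ^ (1 / (1 - a))) ≤ Real.exp (s * ν * (1 - a) * t) * w x := by
  have h1a : 0 < 1 - a := by linarith
  have hc : 0 ≤ ν * (1 - a) * t := by positivity
  have hy : ((x ^ (1 - a) + ν * (1 - a) * t) ^ (1 / (1 - a))) ^ (1 - a)
      = x ^ (1 - a) + ν * (1 - a) * t := by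
    rw [one_div]
    exact rpow_inv_rpow (by positivity) h1a.ne'
  rw [hw, hw, hy]
  convert one_add_exp_mul_one_add_exp_neg_add_le (s * x ^ (1 - a))
    (mul_nonneg hs hc) using 2 <;> ring_nf

theorem weight_estimate (s a ν : ℝ) (hs : 0 ≤ s) (ha : 0 < a) (ha1 : a < 1) (hν : 0 < ν)
    (w : ℝ → ℝ)
    (hw : ∀ x, w x = (1 + Real.exp (s * x ^ (1 - a))) * (1 + Real.exp (-(s * x ^ (1 - a)))))
    (t x : ℝ) (ht : 0 ≤ t) (hx : 0 ≤ x) :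
    w ((x ^ (1 - a) + ν * (1 - a) * t) ^ (1 / (1 - a))) ≤ Real.exp (s * ν * (1 - a) * t) * w x :=
  weight_estimate_general s a ν hs ha1 hν w hw t x ht hx
end

section
/- Let s ≥ 0, 0 < a < 1, ν > 0, ω = sν(1-a). For any bounded measurable f : [0,∞) → ℂ with weighted sup norm ‖f‖_s = sup_x |f(x)|/w_s(x) finite, where w_s(x) = (1 + e^{s x^{1-a}})(1 + e^{-s x^{1-a}}), and any t ∈ ℝ, the function (S(t)f)(x) = f(|x^{1-a} + ν(1-a)t|^{1/(1-a)}) satisfies ‖S(t)f‖_s ≤ e^{ω|t|} ‖f‖_s. -/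
lemma quasi_key (v c : ℝ) :
    (1 + Real.exp |v + c|) * (1 + Real.exp (-|v + c|)) ≤
      Real.exp |c| * ((1 + Real.exp v) * (1 + Real.exp (-v))) := by
  have h1 : Real.exp |v + c| * Real.exp (-|v + c|) = 1 := by
    rw [← Real.exp_add]; simp
  have h2 : Real.exp v * Real.exp (-v) = 1 := by
    rw [← Real.exp_add]; simp
  have hsym : Real.exp |v + c| + Real.exp (-|v + c|)
      = Real.exp (v + c) + Real.exp (-(v + c)) := by
    rcases abs_cases (v + c) with ⟨h, _⟩ | ⟨h, _⟩ <;> rw [h] <;> ring_nf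
  have hvc : Real.exp (v + c) = Real.exp v * Real.exp c := by rw [← Real.exp_add]
  have hvc' : Real.exp (-(v + c)) = Real.exp (-v) * Real.exp (-c) := by
    rw [← Real.exp_add]; ring_nf
  have hc1 : Real.exp c ≤ Real.exp |c| := Real.exp_le_exp.2 (le_abs_self c)
  have hc2 : Real.exp (-c) ≤ Real.exp |c| := Real.exp_le_exp.2 (neg_le_abs c)
  have hone : (1:ℝ) ≤ Real.exp |c| := Real.one_le_exp (abs_nonneg c)
  have hpv : 0 < Real.exp v := Real.exp_pos v
  have hpv' : 0 < Real.exp (-v) := Real.exp_pos (-v)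
  nlinarith [mul_le_mul_of_nonneg_left hc1 hpv.le,
    mul_le_mul_of_nonneg_left hc2 hpv'.le]

theorem quasicontractivity (s a ν : ℝ) (hs : 0 ≤ s) (ha : 0 < a) (ha1 : a < 1) (hν : 0 < ν)
    (ω : ℝ) (hω : ω = s * ν * (1 - a))
    (w : ℝ → ℝ)
    (hw : ∀ x, w x = (1 + Real.exp (s * x ^ (1 - a))) * (1 + Real.exp (-(s * x ^ (1 - a)))))
    (f : ℝ → ℂ) (hmeas : Measurable f)
    (hbdd : BddAbove (Set.range fun x : Set.Ici (0:ℝ) => ‖f x‖ / w x))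
    (t : ℝ)
    (Sf : ℝ → ℂ)
    (hSf : ∀ x, Sf x = f (|x ^ (1 - a) + ν * (1 - a) * t| ^ (1 / (1 - a)))) :
    (⨆ x : Set.Ici (0:ℝ), ‖Sf x‖ / w x) ≤
      Real.exp (ω * |t|) * ⨆ x : Set.Ici (0:ℝ), ‖f x‖ / w x := by
  have ha' : (0:ℝ) < 1 - a := by linarith
  have hω0 : 0 ≤ ω := by rw [hω]; positivity
  set M := ⨆ x : Set.Ici (0:ℝ), ‖f x‖ / w x with hM
  have hwpos : ∀ x : ℝ, 0 < w x := by
    intro x; rw [hw]; positivity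
  have hM0 : 0 ≤ M := by
    refine le_trans ?_ (le_ciSup hbdd (⟨0, Set.mem_Ici.2 le_rfl⟩ : Set.Ici (0:ℝ)))
    exact div_nonneg (norm_nonneg _) (hwpos 0).le
  apply ciSup_le
  rintro ⟨x, hx⟩
  simp only [Set.Ici] at hx ⊢
  set z := x ^ (1 - a) + ν * (1 - a) * t with hz
  set y := |z| ^ (1 / (1 - a)) with hy
  have hy0 : 0 ≤ y := Real.rpow_nonneg (abs_nonneg z) _
  have hyz : y ^ (1 - a) = |z| := by
    rw [hy, ← Real.rpow_mul (abs_nonneg z), one_div, inv_mul_cancel₀ (ne_of_gt ha'),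
      Real.rpow_one]
  have hfy : ‖f y‖ / w y ≤ M :=
    le_ciSup hbdd (⟨y, hy0⟩ : Set.Ici (0:ℝ))
  have hwle : w y ≤ Real.exp (ω * |t|) * w x := by
    rw [hw y, hw x, hyz]
    have hsz : s * |z| = |s * x ^ (1 - a) + ω * t| := by
      have hsz' : s * z = s * x ^ (1 - a) + ω * t := by rw [hz, hω]; ring
      rw [← hsz', abs_mul, abs_of_nonneg hs]
    rw [hsz]
    have : ω * |t| = |ω * t| := by
      rw [abs_mul, abs_of_nonneg hω0]
    rw [this]
    exact quasi_key (s * x ^ (1 - a)) (ω * t)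
  have hSfx : ‖Sf x‖ = ‖f y‖ := by rw [hSf]
  rw [hSfx, div_le_iff₀ (hwpos x)]
  have h1 : ‖f y‖ ≤ M * w y := (div_le_iff₀ (hwpos y)).1 hfy
  calc ‖f y‖ ≤ M * w y := h1
    _ ≤ M * (Real.exp (ω * |t|) * w x) := by
        exact mul_le_mul_of_nonneg_left hwle hM0
    _ = Real.exp (ω * |t|) * M * w x := by ring
end

section
/- Let s ≥ 0, 0 < a < 1, ν > 0, and let f : [0,∞) → ℂ be continuously differentiable with compact support contained in [0, M]. Then ‖S(t)f − f‖_s → 0 as t → 0, where (S(t)f)(x) = f(|x^{1-a} + ν(1-a)t|^{1/(1-a)}) and ‖g‖_s = sup_{x≥0} |g(x)| / ((1 + e^{s x^{1-a}})(1 + e^{-s x^{1-a}})). -/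
/-!
In the variable `u = x ^ (1 - a)` the semigroup is a translation: with `g u = f (|u| ^ (1/(1-a)))`
one has `f x = g (x ^ (1 - a))` and `(S t f) x = g (x ^ (1 - a) + ν (1 - a) t)`. Since `f` is
continuous with compact support, so is `g`; hence `g` is uniformly continuous and its translates
converge to it uniformly. The weight is at least `1`, so the weighted sup norm is dominated by the
uniform norm.
-/

open Filter Topology

lemma tendsto_iSup_norm_sub_div_of_tendstoUniformly {α ι E : Type*}
    [SeminormedAddCommGroup E] {F : α → ι → E} {g : ι → E} {w : ι → ℝ} {l : Filter α}
    (h : TendstoUniformly F g l) (hw : ∀ i, 1 ≤ w i) :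
    Tendsto (fun t => ⨆ i, ‖F t i - g i‖ / w i) l (𝓝 0) := by
  rw [Metric.tendsto_nhds]
  intro ε hε
  filter_upwards [Metric.tendstoUniformly_iff.mp h (ε / 2) (half_pos hε)] with t ht
  have hle : ∀ i, ‖F t i - g i‖ / w i ≤ ε / 2 := fun i =>
    calc ‖F t i - g i‖ / w i ≤ ‖F t i - g i‖ := div_le_self (norm_nonneg _) (hw i)
      _ ≤ ε / 2 := by rw [← dist_eq_norm, dist_comm]; exact (ht i).le
  have hnonneg : 0 ≤ ⨆ i, ‖F t i - g i‖ / w i :=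
    Real.iSup_nonneg fun i => div_nonneg (norm_nonneg _) (zero_le_one.trans (hw i))
  rw [Real.dist_eq, sub_zero, abs_of_nonneg hnonneg]
  exact (Real.iSup_le hle (half_pos hε).le).trans_lt (half_lt_self hε)

lemma tendsto_abs_rpow_cocompact {p : ℝ} (hp : 0 < p) :
    Tendsto (fun u : ℝ => |u| ^ p) (cocompact ℝ) (cocompact ℝ) :=
  ((tendsto_rpow_atTop hp).comp tendsto_norm_cocompact_atTop).mono_right atTop_le_cocompact

lemma Continuous.uniformContinuous_comp_abs_rpow {E : Type*} [UniformSpace E] {f : ℝ → E}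
    {x : E} (hf : Continuous f) (hfx : Tendsto f (cocompact ℝ) (𝓝 x)) {p : ℝ} (hp : 0 < p) :
    UniformContinuous fun u => f (|u| ^ p) :=
  (hf.comp ((Real.continuous_rpow_const hp.le).comp continuous_abs)
    ).uniformContinuous_of_tendsto_cocompact (hfx.comp (tendsto_abs_rpow_cocompact hp))

lemma UniformContinuous.tendstoUniformly_comp_add_mul {E : Type*} [UniformSpace E] {g : ℝ → E}
    (hg : UniformContinuous g) (c : ℝ) :
    TendstoUniformly (fun t u => g (u + c * t)) g (𝓝 0) := by
  have hshift : UniformContinuous₂ fun t u : ℝ => g (u + c * t) :=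
    hg.comp (uniformContinuous_snd.add (uniformContinuous_fst.const_mul' c))
  simpa using hshift.tendstoUniformly (x := 0)

lemma one_le_one_add_exp_mul_one_add_exp_neg (y : ℝ) :
    1 ≤ (1 + Real.exp y) * (1 + Real.exp (-y)) := by
  nlinarith [Real.exp_pos y, Real.exp_pos (-y)]

theorem strong_continuity_general (s a ν M : ℝ) (ha1 : a < 1)
    (f : ℝ → ℂ) (hf : ContDiff ℝ 1 f) (hsupp : tsupport f ⊆ Set.Icc 0 M)
    (w : ℝ → ℝ)
    (hw : ∀ x, w x = (1 + Real.exp (s * x ^ (1 - a))) * (1 + Real.exp (-(s * x ^ (1 - a)))))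
    (S : ℝ → (ℝ → ℂ) → ℝ → ℂ)
    (hS : ∀ t g x, S t g x = g (|x ^ (1 - a) + ν * (1 - a) * t| ^ (1 / (1 - a)))) :
    Filter.Tendsto (fun t : ℝ => ⨆ x : Set.Ici (0:ℝ), ‖S t f x - f x‖ / w x)
      (nhds 0) (nhds 0) := by
  have hb : 0 < 1 - a := sub_pos.mpr ha1
  set g : ℝ → ℂ := fun u => f (|u| ^ (1 / (1 - a)))
  have hf_compact : HasCompactSupport f :=
    isCompact_Icc.of_isClosed_subset (isClosed_tsupport f) hsupp
  have hg : UniformContinuous g :=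
    hf.continuous.uniformContinuous_comp_abs_rpow hf_compact.is_zero_at_infty (one_div_pos.mpr hb)
  have hf_eq : ∀ x : Set.Ici (0:ℝ), f x = g ((x:ℝ) ^ (1 - a)) := fun x => by
    simp only [g, abs_of_nonneg (Real.rpow_nonneg x.2 _), one_div, Real.rpow_rpow_inv x.2 hb.ne']
  have hS_eq : ∀ t (x : Set.Ici (0:ℝ)), S t f x = g ((x:ℝ) ^ (1 - a) + ν * (1 - a) * t) :=
    fun t x => hS t f x
  simp only [hS_eq, hf_eq]
  exact tendsto_iSup_norm_sub_div_of_tendstoUniformly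
    ((hg.tendstoUniformly_comp_add_mul (ν * (1 - a))).comp
      fun x : Set.Ici (0:ℝ) => (x:ℝ) ^ (1 - a))
    fun x => (hw x).symm ▸ one_le_one_add_exp_mul_one_add_exp_neg _

theorem strong_continuity (s a ν M : ℝ) (hs : 0 ≤ s) (ha : 0 < a) (ha1 : a < 1) (hν : 0 < ν)
    (f : ℝ → ℂ) (hf : ContDiff ℝ 1 f) (hsupp : tsupport f ⊆ Set.Icc 0 M)
    (w : ℝ → ℝ)
    (hw : ∀ x, w x = (1 + Real.exp (s * x ^ (1 - a))) * (1 + Real.exp (-(s * x ^ (1 - a)))))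
    (S : ℝ → (ℝ → ℂ) → ℝ → ℂ)
    (hS : ∀ t g x, S t g x = g (|x ^ (1 - a) + ν * (1 - a) * t| ^ (1 / (1 - a)))) :
    Filter.Tendsto (fun t : ℝ => ⨆ x : Set.Ici (0:ℝ), ‖S t f x - f x‖ / w x)
      (nhds 0) (nhds 0) :=
  strong_continuity_general s a ν M ha1 f hf hsupp w hw S hS
end

section
/- Let X be a Banach space, L : X → X a continuous linear operator, Q₁, Q₂ dense subspaces of X, and Z : Q₁ → Q₁ a map such that: (i) L(Z y) = y for all y ∈ Q₁; (ii) Zⁿ y → 0 as n → ∞ for all y ∈ Q₁; (iii) Lⁿ x → 0 as n → ∞ for all x ∈ Q₂. If X is separable and infinite-dimensional (a Baire, second-countable space), then L is hypercyclic: there exists x ∈ X whose orbit {Lⁿ x : n ∈ ℕ} is dense in X. -/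
/-!
Given nonempty open sets `U` and `V`, pick `x ∈ U ∩ Q₂` and `y ∈ V ∩ Q₁`. The points
`x + Zⁿ y` tend to `x`, while `Lⁿ (x + Zⁿ y) = Lⁿ x + y` tend to `y`, so for large `n` some
point of `U` is sent into `V` by `Lⁿ`: the operator is topologically transitive. By Baire's
theorem, the points whose orbit meets every member of a countable basis form a dense `G_δ`,
and in particular such a point exists.
-/

open Filter Topology Set

theorem Set.LeftInvOn.iterate {α : Type*} {f f' : α → α} {s : Set α} (h : LeftInvOn f' f s)
    (hf : MapsTo f s s) (n : ℕ) : LeftInvOn f'^[n] f^[n] s := by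
  induction n with
  | zero => exact fun _ _ ↦ rfl
  | succ n ih =>
    intro x hx
    rw [Function.iterate_succ_apply' (f := f), Function.iterate_succ_apply (f := f'), h (hf.iterate n hx), ih hx]

namespace Function

variable {α : Type*} [TopologicalSpace α]

def IsTopologicallyTransitive (f : α → α) : Prop :=
  ∀ ⦃U V : Set α⦄, IsOpen U → U.Nonempty → IsOpen V → V.Nonempty →
    ∃ n : ℕ, (U ∩ f^[n] ⁻¹' V).Nonempty

theorem IsTopologicallyTransitive.dense_iUnion_preimage_iterate {f : α → α}
    (hf : IsTopologicallyTransitive f) {V : Set α} (hV : IsOpen V) (hVne : V.Nonempty) :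
    Dense (⋃ n : ℕ, f^[n] ⁻¹' V) := by
  rw [dense_iff_inter_open]
  intro U hU hUne
  simpa only [inter_iUnion, nonempty_iUnion] using hf hU hUne hV hVne

/-- Birkhoff's transitivity theorem. -/
theorem IsTopologicallyTransitive.exists_dense_range_iterate [BaireSpace α]
    [SecondCountableTopology α] [Nonempty α] {f : α → α} (hcont : Continuous f)
    (hf : IsTopologicallyTransitive f) : ∃ x, Dense (range fun n : ℕ ↦ f^[n] x) := by
  obtain ⟨b, hb_countable, hb_empty, hb⟩ := TopologicalSpace.exists_countable_basis α
  have hb_nonempty : ∀ B ∈ b, B.Nonempty := fun B hB ↦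
    nonempty_iff_ne_empty.2 fun h ↦ hb_empty (h ▸ hB)
  have hdense : Dense (⋂ B ∈ b, ⋃ n : ℕ, f^[n] ⁻¹' B) :=
    dense_biInter_of_isOpen
      (fun B hB ↦ isOpen_iUnion fun n ↦ (hb.isOpen hB).preimage (hcont.iterate n)) hb_countable
      (fun B hB ↦ hf.dense_iUnion_preimage_iterate (hb.isOpen hB) (hb_nonempty B hB))
  obtain ⟨x, hx⟩ := hdense.nonempty
  refine ⟨x, hb.dense_iff.2 fun B hB _ ↦ ?_⟩
  obtain ⟨n, hn⟩ := mem_iUnion.1 (mem_iInter₂.1 hx B hB)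
  exact ⟨f^[n] x, hn, n, rfl⟩

end Function

open Function in
theorem isTopologicallyTransitive_of_godefroyShapiro {X F : Type*} [TopologicalSpace X]
    [AddZeroClass X] [ContinuousAdd X] [FunLike F X X] [AddHomClass F X X] {L : F}
    {Z : X → X} {Q₁ Q₂ : Set X} (hQ₁ : Dense Q₁) (hQ₂ : Dense Q₂) (hZ : MapsTo Z Q₁ Q₁)
    (hLZ : LeftInvOn L Z Q₁) (hZlim : ∀ y ∈ Q₁, Tendsto (fun n : ℕ ↦ Z^[n] y) atTop (𝓝 0))
    (hLlim : ∀ x ∈ Q₂, Tendsto (fun n : ℕ ↦ (⇑L)^[n] x) atTop (𝓝 0)) :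
    IsTopologicallyTransitive (⇑L) := by
  intro U V hU hUne hV hVne
  obtain ⟨x, hxU, hxQ⟩ := hQ₂.inter_open_nonempty U hU hUne
  obtain ⟨y, hyV, hyQ⟩ := hQ₁.inter_open_nonempty V hV hVne
  have hstart : Tendsto (fun n : ℕ ↦ x + Z^[n] y) atTop (𝓝 x) := by
    simpa using tendsto_const_nhds.add (hZlim y hyQ)
  have hend : Tendsto (fun n : ℕ ↦ (⇑L)^[n] (x + Z^[n] y)) atTop (𝓝 y) := by
    simp only [iterate_map_add, hLZ.iterate hZ _ hyQ]
    simpa using (hLlim x hxQ).add (tendsto_const_nhds (x := y))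
  obtain ⟨n, hnU, hnV⟩ :=
    ((hstart.eventually (hU.mem_nhds hxU)).and (hend.eventually (hV.mem_nhds hyV))).exists
  exact ⟨n, x + Z^[n] y, hnU, hnV⟩

theorem godefroy_shapiro_criterion_general
    (X : Type*) [NormedAddCommGroup X] [NormedSpace ℂ X] [CompleteSpace X]
    [TopologicalSpace.SeparableSpace X]
    (L : X →L[ℂ] X)
    (Q₁ Q₂ : Submodule ℂ X)
    (hQ₁ : Dense (Q₁ : Set X)) (hQ₂ : Dense (Q₂ : Set X))
    (Z : X → X) (hZmaps : ∀ y ∈ Q₁, Z y ∈ Q₁)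
    (hLZ : ∀ y ∈ Q₁, L (Z y) = y)
    (hZlim : ∀ y ∈ Q₁, Filter.Tendsto (fun n : ℕ => Z^[n] y) Filter.atTop (nhds 0))
    (hLlim : ∀ x ∈ Q₂, Filter.Tendsto (fun n : ℕ => (⇑L)^[n] x) Filter.atTop (nhds 0)) :
    ∃ x : X, Dense (Set.range fun n : ℕ => (⇑L)^[n] x) :=
  (isTopologicallyTransitive_of_godefroyShapiro hQ₁ hQ₂ (fun y hy ↦ hZmaps y hy)
    (fun y hy ↦ hLZ y hy) hZlim hLlim).exists_dense_range_iterate L.continuous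

theorem godefroy_shapiro_criterion
    (X : Type*) [NormedAddCommGroup X] [NormedSpace ℂ X] [CompleteSpace X]
    [TopologicalSpace.SeparableSpace X]
    (hinf : ¬ FiniteDimensional ℂ X)
    (L : X →L[ℂ] X)
    (Q₁ Q₂ : Submodule ℂ X)
    (hQ₁ : Dense (Q₁ : Set X)) (hQ₂ : Dense (Q₂ : Set X))
    (Z : X → X) (hZmaps : ∀ y ∈ Q₁, Z y ∈ Q₁)
    (hLZ : ∀ y ∈ Q₁, L (Z y) = y)
    (hZlim : ∀ y ∈ Q₁, Filter.Tendsto (fun n : ℕ => Z^[n] y) Filter.atTop (nhds 0))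
    (hLlim : ∀ x ∈ Q₂, Filter.Tendsto (fun n : ℕ => (⇑L)^[n] x) Filter.atTop (nhds 0)) :
    ∃ x : X, Dense (Set.range fun n : ℕ => (⇑L)^[n] x) :=
  godefroy_shapiro_criterion_general X L Q₁ Q₂ hQ₁ hQ₂ Z hZmaps hLZ hZlim hLlim
end
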